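/- Let R be a commutative ring over a field k, let F ⊆ Der(R) be a bracket-closed R-submodule, and suppose ρ: A = R^n → F is a surjective R-module map with ρ(e_1),…,ρ(e_n) generating F. Then there exists a k-bilinear, antisymmetric bracket [·,·]_A on A satisfying the Leibniz rule [a, f·b]_A = ρ(a)(f)·b + f·[a,b]_A and such that ρ([a,b]_A) = [ρ(a), ρ(b)] for all a, b ∈ A (i.e., an almost-Lie algebroid structure on the anchored bundle A, possibly without the Jacobi identity). -/

import Mathlib

/-! Write `Xᵢ = ρ eᵢ`. Expanding `ρ a = Σ aᵢ Xᵢ` and `ρ b = Σ bⱼ Xⱼ` gives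
`⁅ρ a, ρ b⁆ = Σ aᵢ bⱼ ⁅Xᵢ, Xⱼ⁆ + Σ ρ a (bⱼ) Xⱼ - Σ ρ b (aᵢ) Xᵢ`. The last two sums are the image
under `ρ` of the componentwise term `ρ a (b) - ρ b (a)`, which is antisymmetric and already carries
the Leibniz rule. The first sum is `R`-bilinear, so it is matched by lifting every `⁅Xᵢ, Xⱼ⁆ ∈ F`
through `ρ` to an antisymmetric family `cᵢⱼ` and adding `Σ aᵢ bⱼ cᵢⱼ`. -/

open Finset

namespace Derivation

variable {k R : Type*} [CommRing k] [CommRing R] [Algebra k R]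

theorem sum_apply {ι : Type*} (s : Finset ι) (X : ι → Derivation k R R) (r : R) :
    (∑ i ∈ s, X i) r = ∑ i ∈ s, X i r := by
  rw [← coeFnAddMonoidHom_apply, map_sum, Finset.sum_apply]
  rfl

theorem smul_lie_smul (f g : R) (X Y : Derivation k R R) :
    ⁅f • X, g • Y⁆ = (f * g) • ⁅X, Y⁆ + (f * X g) • Y - (g * Y f) • X := by
  ext r
  simp only [commutator_apply, add_apply, sub_apply, smul_apply, smul_eq_mul, leibniz]
  ring

theorem sum_smul_lie_sum_smul {ι : Type*} [Fintype ι] (X : ι → Derivation k R R) (a b : ι → R) :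
    ⁅∑ i, a i • X i, ∑ j, b j • X j⁆ = ∑ i, ∑ j, (a i * b j) • ⁅X i, X j⁆
      + ∑ j, (∑ i, a i • X i) (b j) • X j - ∑ i, (∑ j, b j • X j) (a i) • X i := by
  simp only [sum_lie, lie_sum, smul_lie_smul, sum_add_distrib, sum_sub_distrib, sum_apply,
    smul_apply, smul_eq_mul, sum_smul, mul_smul]
  exact congrArg₂ _ (congrArg₂ _ sum_comm rfl) sum_comm

end Derivation

theorem LinearMap.pi_apply_eq_sum_univ_single {R M ι : Type*} [CommSemiring R] [AddCommMonoid M]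
    [Module R M] [Fintype ι] [DecidableEq ι] (f : (ι → R) →ₗ[R] M) (x : ι → R) :
    f x = ∑ i, x i • f (Pi.single i 1) := by
  conv_lhs => rw [pi_eq_sum_univ' x]
  simp only [map_sum, map_smul]

/-- Lifting only for `i < j` avoids halving `dᵢⱼ - dⱼᵢ`, impossible in characteristic `2`. -/
theorem exists_antisymm_lift {ι M N F : Type*} [LinearOrder ι] [AddGroup M] [AddGroup N]
    [FunLike F M N] [AddMonoidHomClass F M N] (φ : F) (T : ι → ι → N)
    (hT : ∀ i j, T j i = -T i j) (hT_self : ∀ i, T i i = 0) (hφT : ∀ i j, ∃ m, φ m = T i j) :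
    ∃ c : ι → ι → M, (∀ i j, c j i = -c i j) ∧ ∀ i j, φ (c i j) = T i j := by
  choose d hd using hφT
  refine ⟨fun i j => if i < j then d i j else if j < i then -d j i else 0, ?_, ?_⟩
  · intro i j
    rcases lt_trichotomy i j with h | rfl | h
    · simp only [if_pos h, if_neg h.not_gt]
    · simp only [lt_irrefl, if_false, neg_zero]
    · simp only [if_pos h, if_neg h.not_gt, neg_neg]
  · intro i j
    rcases lt_trichotomy i j with h | rfl | h
    · simp only [if_pos h, hd]
    · simp only [lt_irrefl, if_false, map_zero, hT_self]
    · simp only [if_pos h, if_neg h.not_gt, map_neg, hd, hT i j, neg_neg]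

section LeibnizBracket

variable {k R ι : Type*} [CommRing k] [CommRing R] [Algebra k R] [Fintype ι]
  (ρ : (ι → R) →ₗ[R] Derivation k R R) (c : ι → ι → ι → R)

def leibnizBracket (a b : ι → R) : ι → R :=
  ∑ i, ∑ j, (a i * b j) • c i j + fun x => ρ a (b x) - ρ b (a x)

theorem leibnizBracket_add_left (a b d : ι → R) :
    leibnizBracket ρ c (a + b) d = leibnizBracket ρ c a d + leibnizBracket ρ c b d := by
  funext x
  simp only [leibnizBracket, Pi.add_apply, map_add, Derivation.add_apply, add_mul, add_smul,
    sum_add_distrib]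
  ring

theorem leibnizBracket_smul_left (t : k) (a b : ι → R) :
    leibnizBracket ρ c (t • a) b = t • leibnizBracket ρ c a b := by
  funext x
  simp only [leibnizBracket, Pi.add_apply, Pi.smul_apply, LinearMap.map_smul_of_tower,
    Derivation.smul_apply, Derivation.map_smul, Finset.sum_apply, smul_eq_mul, smul_mul_assoc,
    smul_sum, smul_add, smul_sub]

theorem leibnizBracket_antisymm (hc : ∀ i j, c j i = -c i j) (a b : ι → R) :
    leibnizBracket ρ c a b = -leibnizBracket ρ c b a := by
  have hsum : ∑ i, ∑ j, (b i * a j) • c i j = -∑ i, ∑ j, (a i * b j) • c i j := by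
    rw [sum_comm, ← sum_neg_distrib]
    refine sum_congr rfl fun i _ => ?_
    rw [← sum_neg_distrib]
    refine sum_congr rfl fun j _ => ?_
    rw [hc, mul_comm, smul_neg]
  have hder : (fun x => ρ b (a x) - ρ a (b x)) = -fun x => ρ a (b x) - ρ b (a x) := by
    funext x
    simp only [Pi.neg_apply, neg_sub]
  rw [leibnizBracket, leibnizBracket, hsum, hder, neg_add, neg_neg, neg_neg]

theorem leibnizBracket_smul_right (a b : ι → R) (f : R) :
    leibnizBracket ρ c a (f • b) = ρ a f • b + f • leibnizBracket ρ c a b := by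
  have hsum : ∑ i, ∑ j, (a i * (f • b) j) • c i j = f • ∑ i, ∑ j, (a i * b j) • c i j := by
    simp only [Pi.smul_apply, smul_eq_mul, smul_sum, smul_smul, mul_left_comm]
  have hder : (fun x => ρ a ((f • b) x) - ρ (f • b) (a x))
      = ρ a f • b + f • fun x => ρ a (b x) - ρ b (a x) := by
    funext x
    simp only [Pi.smul_apply, Pi.add_apply, map_smul, Derivation.smul_apply, smul_eq_mul,
      Derivation.leibniz]
    ring
  rw [leibnizBracket, leibnizBracket, hsum, hder, smul_add, add_left_comm]

variable [DecidableEq ι]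

theorem map_leibnizBracket (hc : ∀ i j, ρ (c i j) = ⁅ρ (Pi.single i 1), ρ (Pi.single j 1)⁆)
    (a b : ι → R) : ρ (leibnizBracket ρ c a b) = ⁅ρ a, ρ b⁆ := by
  set X : ι → Derivation k R R := fun i => ρ (Pi.single i 1)
  have hρ : ∀ v, ρ v = ∑ i, v i • X i := ρ.pi_apply_eq_sum_univ_single
  calc ρ (leibnizBracket ρ c a b)
      = ∑ i, ∑ j, (a i * b j) • ⁅X i, X j⁆ + ∑ j, ρ a (b j) • X j - ∑ i, ρ b (a i) • X i := by
        rw [leibnizBracket, map_add, map_sum, hρ fun x => ρ a (b x) - ρ b (a x)]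
        simp only [map_sum, map_smul, hc, sub_smul, sum_sub_distrib, add_sub_assoc]
        rfl
    _ = ⁅ρ a, ρ b⁆ := by
        rw [hρ a, hρ b, Derivation.sum_smul_lie_sum_smul]

end LeibnizBracket

/-- Every trivial anchored bundle `ρ : Rⁿ → F` over a bracket-closed module of
derivations carries an almost-Lie algebroid bracket: `k`-bilinear, antisymmetric,
satisfying the Leibniz rule, and intertwining `ρ` with the commutator bracket. -/
theorem stmt15 (k R : Type) [Field k] [CommRing R] [Algebra k R] (n : ℕ)
    (F : Submodule R (Derivation k R R))
    (hF : ∀ X ∈ F, ∀ Y ∈ F, ⁅X, Y⁆ ∈ F)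
    (ρ : (Fin n → R) →ₗ[R] Derivation k R R)
    (hρF : ∀ a : Fin n → R, ρ a ∈ F)
    (hsurj : ∀ X ∈ F, ∃ a : Fin n → R, ρ a = X) :
    ∃ Br : (Fin n → R) → (Fin n → R) → (Fin n → R),
      (∀ a b c : Fin n → R, Br (a + b) c = Br a c + Br b c) ∧
      (∀ (t : k) (a b : Fin n → R), Br (t • a) b = t • Br a b) ∧
      (∀ a b : Fin n → R, Br a b = - Br b a) ∧
      (∀ (a b : Fin n → R) (f : R), Br a (f • b) = (ρ a) f • b + f • Br a b) ∧
      (∀ a b : Fin n → R, ρ (Br a b) = ⁅ρ a, ρ b⁆) := by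
  obtain ⟨c, hc_antisymm, hρc⟩ := exists_antisymm_lift ρ
    (fun i j => ⁅ρ (Pi.single i 1), ρ (Pi.single j 1)⁆) (fun _ _ => (lie_skew _ _).symm)
    (fun _ => lie_self _) (fun _ _ => hsurj _ (hF _ (hρF _) _ (hρF _)))
  exact ⟨leibnizBracket ρ c, leibnizBracket_add_left ρ c, leibnizBracket_smul_left ρ c,
    leibnizBracket_antisymm ρ c hc_antisymm, leibnizBracket_smul_right ρ c,
    map_leibnizBracket ρ c hρc⟩
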